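/- For any colex graph C(n,m), the intervals [A \ Int(A); A ∪ Ext(A)] over all maximal independent sets A form a partition of 2^{[n]}. -/

import Mathlib

/-!
Colex graphs are shifted: replacing an endpoint of an edge by a smaller vertex gives again an
edge. In a shifted graph the vertices having a larger neighbour form a down-set and a clique,
while the remaining vertices, the sinks, form an independent set `S`. Shiftedness also lets a
larger neighbour of a vertex of an independent set `A` replace it, so `A \ Int(A)` consists of
the non-sinks of `A`. Hence the maximal independent sets are `S`, whose interval is `[∅; S]`,
and, for each non-sink `c`, the set of `c` and the sinks not adjacent to `c`, whose interval is
`[{c}; {v | c ≤ v}]`. A set `X` lies in the first interval iff it contains no non-sink, and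
otherwise exactly in the interval of `c = min X`.
-/

open Finset

/-- A set of vertices is independent: no two of its vertices are adjacent. -/
def Indep {n : ℕ} (G : SimpleGraph (Fin n)) (A : Finset (Fin n)) : Prop :=
  ∀ u ∈ A, ∀ v ∈ A, ¬ G.Adj u v

instance {n : ℕ} (G : SimpleGraph (Fin n)) [DecidableRel G.Adj] (A : Finset (Fin n)) :
    Decidable (Indep G A) := by unfold Indep; infer_instance

/-- A maximal independent set. -/
def MaxIndep {n : ℕ} (G : SimpleGraph (Fin n)) (A : Finset (Fin n)) : Prop :=
  Indep G A ∧ ∀ B, Indep G B → A ⊆ B → A = B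

/-- Externally active vertices with respect to the independent set `A`:
vertices outside `A` adjacent to and greater than some vertex of `A`. -/
def ExtAct {n : ℕ} (G : SimpleGraph (Fin n)) [DecidableRel G.Adj] (A : Finset (Fin n)) :
    Finset (Fin n) :=
  univ.filter (fun v => v ∉ A ∧ ∃ a ∈ A, G.Adj v a ∧ a < v)

/-- The neighbours of `v` that can substitute `v` in `A` keeping independence. -/
def Subs {n : ℕ} (G : SimpleGraph (Fin n)) [DecidableRel G.Adj] (A : Finset (Fin n))
    (v : Fin n) : Finset (Fin n) :=
  univ.filter (fun u => G.Adj v u ∧ Indep G (insert u (A.erase v)))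

/-- Internally active vertices of `A`: vertices `v ∈ A` with `Subs v = ∅` or
`v` greater than every element of `Subs v`. -/
def IntAct {n : ℕ} (G : SimpleGraph (Fin n)) [DecidableRel G.Adj] (A : Finset (Fin n)) :
    Finset (Fin n) :=
  A.filter (fun v => ∀ u ∈ Subs G A v, u < v)

/-- The interval `[A;B]` of the Boolean lattice. -/
def Itv {n : ℕ} (A B : Finset (Fin n)) : Set (Finset (Fin n)) :=
  {X | A ⊆ X ∧ X ⊆ B}

/-- The colexicographic rank (0-indexed) of the pair `{a,b}` with `a < b`. -/
def colexRank (a b : ℕ) : ℕ := b * (b - 1) / 2 + a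

/-- The colex graph `C(n,m)`: vertex set `{0,…,n-1}`, edges the first `m`
pairs in colexicographic order. -/
def colexGraph (n m : ℕ) : SimpleGraph (Fin n) where
  Adj u v := u ≠ v ∧ colexRank (min (u : ℕ) (v : ℕ)) (max (u : ℕ) (v : ℕ)) < m
  symm := by
    constructor
    intro u v h
    exact ⟨h.1.symm, by rw [min_comm, max_comm]; exact h.2⟩
  loopless := by
    constructor
    intro u h
    exact h.1 rfl

instance (n m : ℕ) : DecidableRel (colexGraph n m).Adj := fun u v =>
  inferInstanceAs (Decidable (u ≠ v ∧ colexRank (min (u : ℕ) (v : ℕ)) (max (u : ℕ) (v : ℕ)) < m))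

def IsShifted {n : ℕ} (G : SimpleGraph (Fin n)) : Prop :=
  ∀ ⦃u v w : Fin n⦄, G.Adj w v → u < v → w ≠ u → G.Adj w u

lemma colexRank_mono {a b a' b' : ℕ} (ha : a ≤ a') (hb : b ≤ b') :
    colexRank a b ≤ colexRank a' b' :=
  Nat.add_le_add (Nat.div_le_div_right (Nat.mul_le_mul hb (by omega))) ha

lemma isShifted_colexGraph (n m : ℕ) : IsShifted (colexGraph n m) := by
  rintro u v w ⟨hwv, hr⟩ huv hwu
  have hwv' : (w : ℕ) ≠ v := Fin.val_injective.ne hwv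
  have hwu' : (w : ℕ) ≠ u := Fin.val_injective.ne hwu
  have huv' : (u : ℕ) < v := huv
  exact ⟨hwu, (colexRank_mono (by omega) (by omega)).trans_lt hr⟩

section Definitions

variable {n : ℕ}

def HasLargerNbr (G : SimpleGraph (Fin n)) (v : Fin n) : Prop := ∃ w, v < w ∧ G.Adj v w

instance (G : SimpleGraph (Fin n)) [DecidableRel G.Adj] : DecidablePred (HasLargerNbr G) :=
  fun _ => inferInstanceAs (Decidable (∃ _, _))

def sinks (G : SimpleGraph (Fin n)) [DecidableRel G.Adj] : Finset (Fin n) :=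
  univ.filter fun v => ¬ HasLargerNbr G v

def maxIndepThrough (G : SimpleGraph (Fin n)) [DecidableRel G.Adj] (c : Fin n) :
    Finset (Fin n) :=
  insert c ((sinks G).filter fun v => ¬ G.Adj c v)

def activityInterval (G : SimpleGraph (Fin n)) [DecidableRel G.Adj] (A : Finset (Fin n)) :
    Set (Finset (Fin n)) :=
  Itv (A \ IntAct G A) (A ∪ ExtAct G A)

end Definitions

section Independence

variable {n : ℕ} {G : SimpleGraph (Fin n)} {A B : Finset (Fin n)} {u v c : Fin n}

lemma Indep.mono (hA : Indep G A) (hBA : B ⊆ A) : Indep G B :=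
  fun u hu v hv => hA u (hBA hu) v (hBA hv)

lemma Indep.insert (hA : Indep G A) (h : ∀ a ∈ A, ¬ G.Adj a v) : Indep G (insert v A) := by
  intro x hx y hy hxy
  rcases mem_insert.1 hx with rfl | hxA <;> rcases mem_insert.1 hy with rfl | hyA
  · exact G.loopless.irrefl _ hxy
  · exact h y hyA hxy.symm
  · exact h x hxA hxy
  · exact hA x hxA y hyA hxy

lemma maxIndep_of_dominating (hA : Indep G A) (hdom : ∀ v ∉ A, ∃ a ∈ A, G.Adj a v) :
    MaxIndep G A := by
  refine ⟨hA, fun B hB hAB => hAB.antisymm fun v hvB => ?_⟩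
  by_contra hvA
  obtain ⟨a, haA, hadj⟩ := hdom v hvA
  exact hB a (hAB haA) v hvB hadj

lemma hasLargerNbr_or_hasLargerNbr (hadj : G.Adj u v) : HasLargerNbr G u ∨ HasLargerNbr G v :=
  (G.ne_of_adj hadj).lt_or_gt.imp (fun h => ⟨v, h, hadj⟩) fun h => ⟨u, h, hadj.symm⟩

variable [DecidableRel G.Adj]

lemma mem_sinks : v ∈ sinks G ↔ ¬ HasLargerNbr G v := by
  simp [sinks]

lemma mem_maxIndepThrough :
    v ∈ maxIndepThrough G c ↔ v = c ∨ (¬ HasLargerNbr G v ∧ ¬ G.Adj c v) := by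
  simp [maxIndepThrough, mem_sinks]

lemma indep_sinks : Indep G (sinks G) := by
  intro u hu v hv hadj
  rw [mem_sinks] at hu hv
  exact (hasLargerNbr_or_hasLargerNbr hadj).elim hu hv

lemma indep_maxIndepThrough : Indep G (maxIndepThrough G c) := by
  intro u hu v hv hadj
  rw [mem_maxIndepThrough] at hu hv
  rcases hu with rfl | ⟨hu, hcu⟩ <;> rcases hv with rfl | ⟨hv, hcv⟩
  · exact G.loopless.irrefl _ hadj
  · exact hcv hadj
  · exact hcu hadj.symm
  · exact (hasLargerNbr_or_hasLargerNbr hadj).elim hu hv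

lemma extAct_sinks : ExtAct G (sinks G) = ∅ := by
  refine filter_eq_empty_iff.2 fun v _ ⟨_, a, ha, hadj, hav⟩ => ?_
  exact mem_sinks.1 ha ⟨v, hav, hadj.symm⟩

end Independence

namespace IsShifted

variable {n : ℕ} {G : SimpleGraph (Fin n)} {A : Finset (Fin n)} {u v w c : Fin n}

lemma hasLargerNbr_of_le (hG : IsShifted G) (hv : HasLargerNbr G v) (huv : u ≤ v) :
    HasLargerNbr G u := by
  obtain ⟨w, hvw, hadj⟩ := hv
  rcases eq_or_lt_of_le huv with rfl | huv
  · exact ⟨w, hvw, hadj⟩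
  · exact ⟨w, huv.trans hvw, (hG hadj.symm huv (huv.trans hvw).ne').symm⟩

lemma adj_of_hasLargerNbr (hG : IsShifted G) (huv : u ≠ v) (hu : HasLargerNbr G u)
    (hv : HasLargerNbr G v) : G.Adj u v := by
  wlog h : u < v generalizing u v
  · exact (this huv.symm hv hu (huv.symm.lt_of_le (not_lt.1 h))).symm
  obtain ⟨w, hvw, hadj⟩ := hv
  exact (hG hadj (h.trans hvw) huv.symm).symm

variable [DecidableRel G.Adj]

/-- The largest neighbour of `v` is a sink. -/
lemma exists_mem_sinks_adj (hG : IsShifted G) (hv : HasLargerNbr G v) :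
    ∃ w ∈ sinks G, G.Adj v w := by
  obtain ⟨w₀, hvw₀, hw₀⟩ := hv
  obtain ⟨w, hw, hmax⟩ := (univ.filter (G.Adj v)).exists_max_image id ⟨w₀, by simpa using hw₀⟩
  have hvw : v < w := hvw₀.trans_le (hmax w₀ (by simpa using hw₀))
  refine ⟨w, mem_sinks.2 fun ⟨w', hww', hadj⟩ => ?_, (mem_filter.1 hw).2⟩
  have hvw' : G.Adj v w' := (hG hadj.symm hvw (hvw.trans hww').ne').symm
  exact (hmax w' (by simpa using hvw')).not_gt hww'

lemma maxIndep_sinks (hG : IsShifted G) : MaxIndep G (sinks G) := by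
  refine maxIndep_of_dominating indep_sinks fun v hv => ?_
  obtain ⟨w, hw, hadj⟩ := hG.exists_mem_sinks_adj (not_not.1 (mt mem_sinks.2 hv))
  exact ⟨w, hw, hadj.symm⟩

lemma maxIndep_maxIndepThrough (hG : IsShifted G) (hc : HasLargerNbr G c) :
    MaxIndep G (maxIndepThrough G c) := by
  refine maxIndep_of_dominating indep_maxIndepThrough fun v hv => ⟨c, mem_insert_self _ _, ?_⟩
  rw [mem_maxIndepThrough, not_or, not_and_or, not_not, not_not] at hv
  exact hv.2.elim (hG.adj_of_hasLargerNbr (Ne.symm hv.1) hc) id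

lemma eq_sinks_or_eq_maxIndepThrough (hG : IsShifted G) (hA : MaxIndep G A) :
    A = sinks G ∨ ∃ c, HasLargerNbr G c ∧ A = maxIndepThrough G c := by
  by_cases h : ∃ c ∈ A, HasLargerNbr G c
  · obtain ⟨c, hcA, hc⟩ := h
    refine Or.inr ⟨c, hc, hA.2 _ indep_maxIndepThrough fun a ha => ?_⟩
    have hca : ¬ G.Adj c a := hA.1 c hcA a ha
    rw [mem_maxIndepThrough, or_iff_not_imp_left]
    exact fun hac => ⟨fun ha => hca (hG.adj_of_hasLargerNbr (Ne.symm hac) hc ha), hca⟩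
  · push Not at h
    exact Or.inl (hA.2 _ indep_sinks fun a ha => mem_sinks.2 (h a ha))

lemma mem_subs (hG : IsShifted G) (hA : Indep G A) (hv : v ∈ A) (hvw : v < w)
    (hadj : G.Adj v w) : w ∈ Subs G A v := by
  refine mem_filter.2 ⟨mem_univ _, hadj, (hA.mono (erase_subset v A)).insert fun a ha haw => ?_⟩
  exact hA a (mem_erase.1 ha).2 v hv (hG haw hvw (mem_erase.1 ha).1)

lemma intAct_eq_filter (hG : IsShifted G) (hA : Indep G A) :
    IntAct G A = A.filter fun v => ¬ HasLargerNbr G v := by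
  refine filter_congr fun v hv => ⟨fun h ⟨w, hvw, hadj⟩ => ?_, fun hv u hu => ?_⟩
  · exact (h w (hG.mem_subs hA hv hvw hadj)).not_gt hvw
  · have hadj : G.Adj v u := (mem_filter.1 hu).2.1
    exact (not_lt.1 fun h => hv ⟨u, h, hadj⟩).lt_of_ne (G.ne_of_adj hadj).symm

lemma sdiff_intAct (hG : IsShifted G) (hA : Indep G A) :
    A \ IntAct G A = A.filter (HasLargerNbr G) := by
  ext v
  simp only [mem_sdiff, mem_filter, hG.intAct_eq_filter hA]
  tauto

lemma le_of_mem_maxIndepThrough (hG : IsShifted G) (hc : HasLargerNbr G c)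
    (hv : v ∈ maxIndepThrough G c) : c ≤ v := by
  rcases mem_maxIndepThrough.1 hv with rfl | ⟨hv, -⟩
  · exact le_rfl
  · exact not_lt.1 fun h => hv (hG.hasLargerNbr_of_le hc h.le)

lemma maxIndepThrough_union_extAct (hG : IsShifted G) (hc : HasLargerNbr G c) :
    maxIndepThrough G c ∪ ExtAct G (maxIndepThrough G c) = Ici c := by
  ext v
  simp only [mem_union, mem_Ici]
  refine ⟨fun h => h.elim (hG.le_of_mem_maxIndepThrough hc) fun hv => ?_, fun hcv => ?_⟩
  · obtain ⟨-, a, ha, -, hav⟩ := (mem_filter.1 hv).2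
    exact (hG.le_of_mem_maxIndepThrough hc ha).trans hav.le
  · by_cases hvM : v ∈ maxIndepThrough G c
    · exact Or.inl hvM
    · have hvc : c < v := hcv.lt_of_ne fun h => hvM (h ▸ mem_insert_self _ _)
      have hcv' : G.Adj c v := by
        rw [mem_maxIndepThrough, not_or, not_and_or, not_not, not_not] at hvM
        exact hvM.2.elim (hG.adj_of_hasLargerNbr hvc.ne hc) id
      exact Or.inr (mem_filter.2 ⟨mem_univ _, hvM, c, mem_insert_self _ _, hcv'.symm, hvc⟩)

lemma activityInterval_sinks (hG : IsShifted G) :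
    activityInterval G (sinks G) = Itv ∅ (sinks G) := by
  have hsdiff : sinks G \ IntAct G (sinks G) = ∅ := by
    rw [hG.sdiff_intAct indep_sinks, filter_eq_empty_iff]
    exact fun v hv => mem_sinks.1 hv
  rw [activityInterval, hsdiff, extAct_sinks, union_empty]

lemma activityInterval_maxIndepThrough (hG : IsShifted G) (hc : HasLargerNbr G c) :
    activityInterval G (maxIndepThrough G c) = Itv {c} (Ici c) := by
  have hsdiff : maxIndepThrough G c \ IntAct G (maxIndepThrough G c) = {c} := by
    rw [hG.sdiff_intAct indep_maxIndepThrough]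
    ext v
    simp only [mem_filter, mem_singleton]
    refine ⟨fun ⟨hv, hvc⟩ => ?_, fun h => by subst h; exact ⟨mem_insert_self _ _, hc⟩⟩
    exact (mem_maxIndepThrough.1 hv).resolve_right fun h => h.1 hvc
  rw [activityInterval, hsdiff, hG.maxIndepThrough_union_extAct hc]

theorem iUnion_activityInterval (hG : IsShifted G) :
    ⋃ A ∈ {A | MaxIndep G A}, activityInterval G A = Set.univ := by
  refine Set.eq_univ_of_forall fun X => Set.mem_iUnion₂.2 ?_
  by_cases h : ∃ c ∈ X, HasLargerNbr G c
  · obtain ⟨c, hcX, hc⟩ := h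
    have hX : X.Nonempty := ⟨c, hcX⟩
    have hmin : HasLargerNbr G (X.min' hX) := hG.hasLargerNbr_of_le hc (X.min'_le c hcX)
    refine ⟨_, hG.maxIndep_maxIndepThrough hmin, ?_⟩
    rw [hG.activityInterval_maxIndepThrough hmin]
    exact ⟨singleton_subset_iff.2 (X.min'_mem hX), fun v hv => mem_Ici.2 (X.min'_le v hv)⟩
  · push Not at h
    refine ⟨_, hG.maxIndep_sinks, ?_⟩
    rw [hG.activityInterval_sinks]
    exact ⟨empty_subset _, fun v hv => mem_sinks.2 (h v hv)⟩

lemma subset_sinks_of_mem_activityInterval (hG : IsShifted G) {X : Finset (Fin n)}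
    (hX : X ∈ activityInterval G (sinks G)) : X ⊆ sinks G := by
  rw [hG.activityInterval_sinks] at hX
  exact hX.2

lemma isLeast_of_mem_activityInterval (hG : IsShifted G) (hc : HasLargerNbr G c)
    {X : Finset (Fin n)} (hX : X ∈ activityInterval G (maxIndepThrough G c)) :
    IsLeast (X : Set (Fin n)) c := by
  rw [hG.activityInterval_maxIndepThrough hc] at hX
  exact ⟨hX.1 (mem_singleton_self c), fun v hv => mem_Ici.1 (hX.2 hv)⟩

theorem pairwiseDisjoint_activityInterval (hG : IsShifted G) :
    {A | MaxIndep G A}.PairwiseDisjoint (activityInterval G) := by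
  intro A hA B hB hAB
  refine Set.disjoint_left.2 fun X hXA hXB => hAB ?_
  rcases hG.eq_sinks_or_eq_maxIndepThrough hA with rfl | ⟨c, hc, rfl⟩ <;>
    rcases hG.eq_sinks_or_eq_maxIndepThrough hB with rfl | ⟨d, hd, rfl⟩
  · rfl
  · exact absurd hd (mem_sinks.1 (hG.subset_sinks_of_mem_activityInterval hXA
      (hG.isLeast_of_mem_activityInterval hd hXB).1))
  · exact absurd hc (mem_sinks.1 (hG.subset_sinks_of_mem_activityInterval hXB
      (hG.isLeast_of_mem_activityInterval hc hXA).1))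
  · rw [(hG.isLeast_of_mem_activityInterval hc hXA).unique
      (hG.isLeast_of_mem_activityInterval hd hXB)]

end IsShifted

/-- For any colex graph the intervals generated by the maximal independent sets
form a partition of the Boolean lattice of the vertex set. -/
theorem colexGraph_partition (n m : ℕ) :
    (⋃ A ∈ {A : Finset (Fin n) | MaxIndep (colexGraph n m) A},
        Itv (A \ IntAct (colexGraph n m) A) (A ∪ ExtAct (colexGraph n m) A)) = Set.univ ∧
    ({A : Finset (Fin n) | MaxIndep (colexGraph n m) A}.PairwiseDisjoint
        (fun A => Itv (A \ IntAct (colexGraph n m) A) (A ∪ ExtAct (colexGraph n m) A))) :=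
  ⟨(isShifted_colexGraph n m).iUnion_activityInterval,
    (isShifted_colexGraph n m).pairwiseDisjoint_activityInterval⟩
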